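/- The collection σ defined by σ_𝟎 = τ, σ_{e_i} = σ_i for i ∈ {1,…,c}, and σ_u = 0 for all u ∈ ℕ^c with |u| ≥ 2, is a system of higher homotopies for a₁,…,a_c on the Taylor complex T: (i) σ_𝟎 = τ satisfies τ ∘ τ = 0; (ii) for each j ∈ {1,…,c}, σ_𝟎 ∘ σ_{e_j} + σ_{e_j} ∘ σ_𝟎 equals multiplication by a_j on T; and (iii) for every u ∈ ℕ^c with |u| ≥ 2, Σ_{b + b' = u} σ_b ∘ σ_{b'} = 0. -/

import Mathlib

open MvPolynomial

/-- The position `p_{t,S}` of `t` in `S ∪ {t}`: one plus the number of elements of `S`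
smaller than `t`. -/
def taylorPos {r : ℕ} (S : Finset (Fin r)) (t : Fin r) : ℕ :=
  (S.filter fun s => s < t).card + 1

variable (𝕜 : Type*) [Field 𝕜] {n r : ℕ}

/-- `m_S`: the lcm of the monomials `m_j = x^{v j}` for `j ∈ S` (equal to `1` when `S = ∅`). -/
noncomputable def taylorLcm (v : Fin r → (Fin n →₀ ℕ)) (S : Finset (Fin r)) :
    MvPolynomial (Fin n) 𝕜 :=
  monomial (S.sup v) 1

/-- The matrix entry of the Taylor differential: `(-1)^{k-i} m_S / m_{S∖{s}}`
(where `i = p_{s,S}` is the position of `s` in `S` and `k = |S|`). -/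
noncomputable def taylorEntry (v : Fin r → (Fin n →₀ ℕ)) (S : Finset (Fin r)) (s : Fin r) :
    MvPolynomial (Fin n) 𝕜 :=
  (-1) ^ (S.card - taylorPos S s) * monomial (S.sup v - (S.erase s).sup v) 1

/-- The matrix entry of the homotopy `σ`:
`(-1)^{k - p_{t,S} - 1} f_t m_t m_S / m_{S ∪ {t}}` (where `k = |S|`); the sign is written as
`(-1)^{k + p_{t,S} + 1}`, which agrees with `(-1)^{k - p_{t,S} - 1}` since the exponents have
the same parity. -/
noncomputable def htpyEntry (v : Fin r → (Fin n →₀ ℕ)) (f : Fin r → MvPolynomial (Fin n) 𝕜)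
    (S : Finset (Fin r)) (t : Fin r) : MvPolynomial (Fin n) 𝕜 :=
  (-1) ^ (S.card + taylorPos S t + 1) *
    (f t * monomial (v t + S.sup v - (insert t S).sup v) 1)

/-- The total module of the Taylor complex: the free `Q`-module with basis
`{ε_S : S ⊆ {1,…,r}}`; the basis element `ε_S` is `Finsupp.single S 1`. -/
abbrev TaylorModule (n r : ℕ) := Finset (Fin r) →₀ MvPolynomial (Fin n) 𝕜

/-- The Taylor differential `τ` on the total module,
`τ(ε_S) = Σ_{s ∈ S} (-1)^{|S| - p_{s,S}} (m_S / m_{S∖{s}}) ε_{S∖{s}}`. -/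
noncomputable def taylorTau (v : Fin r → (Fin n →₀ ℕ)) :
    TaylorModule 𝕜 n r →ₗ[MvPolynomial (Fin n) 𝕜] TaylorModule 𝕜 n r :=
  Finsupp.lsum (MvPolynomial (Fin n) 𝕜) fun S =>
    LinearMap.toSpanSingleton _ _
      (∑ s ∈ S, Finsupp.single (S.erase s) (taylorEntry 𝕜 v S s))

/-- The homotopy `σ` attached to a coefficient family `f` (with `a = Σ_j f_j m_j`):
`σ(ε_S) = Σ_{t ∉ S} (-1)^{|S| - p_{t,S} - 1} (f_t m_t m_S / m_{S∪{t}}) ε_{S∪{t}}`. -/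
noncomputable def taylorHtpy (v : Fin r → (Fin n →₀ ℕ)) (f : Fin r → MvPolynomial (Fin n) 𝕜) :
    TaylorModule 𝕜 n r →ₗ[MvPolynomial (Fin n) 𝕜] TaylorModule 𝕜 n r :=
  Finsupp.lsum (MvPolynomial (Fin n) 𝕜) fun S =>
    LinearMap.toSpanSingleton _ _
      (∑ t ∈ Sᶜ, Finsupp.single (insert t S) (htpyEntry 𝕜 v f S t))

/-- The collection `σ_u` of statement 5: `σ_𝟎 = τ`, `σ_{e_i} = σ_i`, and `σ_u = 0` for
`|u| ≥ 2` (indices `u ∈ ℕ^c` are encoded as `Fin c →₀ ℕ`). -/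
noncomputable def taylorSystem {𝕜 : Type*} [Field 𝕜] {n r c : ℕ}
    (v : Fin r → (Fin n →₀ ℕ)) (f : Fin c → Fin r → MvPolynomial (Fin n) 𝕜)
    (u : Fin c →₀ ℕ) :
    TaylorModule 𝕜 n r →ₗ[MvPolynomial (Fin n) 𝕜] TaylorModule 𝕜 n r :=
  if u = 0 then taylorTau 𝕜 v
  else ∑ i : Fin c, if u = Finsupp.single i 1 then taylorHtpy 𝕜 v (f i) else 0


/-!
Both `τ` and `σ_i` are given by explicit matrices in the basis `ε_S`, so each identity reduces
to identities between products of two matrix entries. Along the two paths from `ε_S` to a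
basis element through different intermediate sets, the monomial parts telescope to the same
monomial while the signs, governed by the positions `p_{t,S}`, are opposite; hence all
off-diagonal contributions cancel in pairs. The only surviving terms are the diagonal ones of
`τ σ_i + σ_i τ`, the one through `ε_{S ∪ {t}}` or `ε_{S ∖ {t}}` being `f_{i,t} m_t`; they add
up to `a_i`. Since `σ` depends additively on the coefficients `f`, the anticommutation
`σ_i σ_j + σ_j σ_i = 0` follows from `σ² = 0` by polarization.
-/

lemma neg_one_pow_tsub {R : Type*} [Ring R] {a b : ℕ} (h : b ≤ a) :
    (-1 : R) ^ (a - b) = (-1) ^ (a + b) := by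
  rw [neg_one_pow_eq_pow_mod_two, neg_one_pow_eq_pow_mod_two (a + b)]
  congr 1
  omega

section Sign

variable {R : Type*} [CommRing R]

lemma neg_one_pow_mul_mul_neg_one_pow_mul {a b : ℕ} {x y m : R} (hxy : x * y = m)
    (h : (a + b) % 2 = 0) : (-1) ^ a * x * ((-1) ^ b * y) = m := by
  calc (-1) ^ a * x * ((-1) ^ b * y) = (-1) ^ ((a + b) % 2) * (x * y) := by
        rw [← neg_one_pow_eq_pow_mod_two]; ring
    _ = m := by rw [h, pow_zero, one_mul, hxy]

lemma neg_one_pow_mul_mul_add_eq_zero {a b c d : ℕ} {x y z w m : R} (hxy : x * y = m)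
    (hzw : z * w = m) (h : (a + b + c + d) % 2 = 1) :
    (-1) ^ a * x * ((-1) ^ b * y) + (-1) ^ c * z * ((-1) ^ d * w) = 0 := by
  have hsign : (-1 : R) ^ (c + d) = -(-1) ^ (a + b) := by
    rw [neg_one_pow_eq_pow_mod_two (c + d), neg_one_pow_eq_pow_mod_two (a + b)]
    rcases Nat.mod_two_eq_zero_or_one (a + b) with hab | hab <;>
      rw [hab, show (c + d) % 2 = 1 - (a + b) % 2 by omega, hab] <;> simp
  calc (-1) ^ a * x * ((-1) ^ b * y) + (-1) ^ c * z * ((-1) ^ d * w)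
      = (-1) ^ (a + b) * (x * y) + (-1) ^ (c + d) * (z * w) := by ring
    _ = 0 := by rw [hxy, hzw, hsign]; ring

end Sign

lemma tsub_add_add_tsub_cancel {α : Type*} [AddCommSemigroup α] [PartialOrder α]
    [ExistsAddOfLE α] [AddLeftMono α] [Sub α] [OrderedSub α] [AddLeftReflectLE α]
    {x y z w : α} (hyx : y ≤ x) (hz : z ≤ w + y) : x - y + (w + y - z) = w + x - z := by
  rw [← add_tsub_assoc_of_le hz, add_left_comm, tsub_add_cancel_of_le hyx]

lemma Finset.sup_erase_le {ι α : Type*} [DecidableEq ι] [SemilatticeSup α] [OrderBot α]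
    {f : ι → α} {s : Finset ι} {a : ι} : (s.erase a).sup f ≤ s.sup f :=
  Finset.sup_mono (Finset.erase_subset a s)

lemma Finset.sup_insert_le_add {ι α : Type*} [DecidableEq ι] [AddCommMonoid α]
    [SemilatticeSup α] [OrderBot α] [CanonicallyOrderedAdd α]
    {f : ι → α} {s : Finset ι} {a : ι} : (insert a s).sup f ≤ f a + s.sup f := by
  rw [Finset.sup_insert]
  exact sup_le le_self_add le_add_self

lemma Finset.sum_sum_erase_eq_zero_of_add_swap {ι M : Type*} [DecidableEq ι]
    [AddCommMonoid M] {A : Finset ι} {g : ι → ι → M}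
    (h : ∀ x ∈ A, ∀ y ∈ A, x ≠ y → g x y + g y x = 0) :
    ∑ x ∈ A, ∑ y ∈ A.erase x, g x y = 0 := by
  rw [Finset.sum_sigma']
  refine Finset.sum_involution (fun p _ => ⟨p.2, p.1⟩) ?_ ?_ ?_ ?_
  · rintro ⟨x, y⟩ hp
    simp only [Finset.mem_sigma, Finset.mem_erase] at hp
    exact h x hp.1 y hp.2.2 hp.2.1.symm
  · rintro ⟨x, y⟩ hp - hswap
    simp only [Finset.mem_sigma, Finset.mem_erase] at hp
    exact hp.2.1 (congrArg Sigma.fst hswap)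
  · rintro ⟨x, y⟩ hp
    simp only [Finset.mem_sigma, Finset.mem_erase] at hp ⊢
    exact ⟨hp.2.2, hp.2.1.symm, hp.1⟩
  · intros
    rfl

lemma Finset.sum_sum_eq_zero_of_add_swap {ι M : Type*} [DecidableEq ι]
    [AddCommMonoid M] {A : Finset ι} {g : ι → ι → M} (hdiag : ∀ x ∈ A, g x x = 0)
    (h : ∀ x ∈ A, ∀ y ∈ A, x ≠ y → g x y + g y x = 0) :
    ∑ x ∈ A, ∑ y ∈ A, g x y = 0 := by
  calc ∑ x ∈ A, ∑ y ∈ A, g x y = ∑ x ∈ A, (g x x + ∑ y ∈ A.erase x, g x y) :=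
        Finset.sum_congr rfl fun x hx => (Finset.add_sum_erase A _ hx).symm
    _ = 0 := by
      rw [Finset.sum_add_distrib, Finset.sum_eq_zero hdiag,
        Finset.sum_sum_erase_eq_zero_of_add_swap h, add_zero]

lemma Finsupp.single_mul_add_single_mul_eq_zero {α R : Type*} [Semiring R] {a : α}
    {q x y z w : R} (h : x * y + z * w = 0) :
    Finsupp.single a (q * x * y) + Finsupp.single a (q * z * w) = 0 := by
  rw [← Finsupp.single_add, mul_assoc, mul_assoc, ← mul_add, h, mul_zero, Finsupp.single_zero]

section Position

variable {S : Finset (Fin r)} {s t : Fin r}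

lemma taylorPos_le_card (hs : s ∈ S) : taylorPos S s ≤ S.card := by
  have hsub : S.filter (· < s) ⊆ S.erase s := fun x hx => by
    rw [Finset.mem_filter] at hx
    exact Finset.mem_erase.2 ⟨hx.2.ne, hx.1⟩
  have := Finset.card_le_card hsub
  rw [Finset.card_erase_of_mem hs] at this
  have := Finset.card_pos.2 ⟨s, hs⟩
  unfold taylorPos
  omega

lemma taylorPos_insert (hs : s ∉ S) (t : Fin r) :
    taylorPos (insert s S) t = taylorPos S t + if s < t then 1 else 0 := by
  unfold taylorPos
  rw [Finset.filter_insert]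
  split_ifs
  · rw [Finset.card_insert_of_notMem (by simp [hs])]
  · rfl

lemma taylorPos_erase (hs : s ∈ S) (t : Fin r) :
    taylorPos (S.erase s) t + (if s < t then 1 else 0) = taylorPos S t := by
  conv_rhs => rw [← Finset.insert_erase hs]
  rw [taylorPos_insert (Finset.notMem_erase s S)]

end Position

section Entries

variable (v : Fin r → (Fin n →₀ ℕ)) (f : Fin r → MvPolynomial (Fin n) 𝕜)
  {S : Finset (Fin r)} {s s' t t' : Fin r}

lemma taylorEntry_of_mem (hs : s ∈ S) :
    taylorEntry 𝕜 v S s =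
      (-1) ^ (S.card + taylorPos S s) * monomial (S.sup v - (S.erase s).sup v) 1 := by
  rw [taylorEntry, neg_one_pow_tsub (taylorPos_le_card hs)]

lemma taylorEntry_mul_taylorEntry_erase_add_swap (hs : s ∈ S) (hs' : s' ∈ S) (hne : s ≠ s') :
    taylorEntry 𝕜 v S s * taylorEntry 𝕜 v (S.erase s) s' +
      taylorEntry 𝕜 v S s' * taylorEntry 𝕜 v (S.erase s') s = 0 := by
  rw [taylorEntry_of_mem 𝕜 v hs, taylorEntry_of_mem 𝕜 v hs',
    taylorEntry_of_mem 𝕜 v (Finset.mem_erase.2 ⟨hne.symm, hs'⟩),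
    taylorEntry_of_mem 𝕜 v (Finset.mem_erase.2 ⟨hne, hs⟩)]
  refine neg_one_pow_mul_mul_add_eq_zero
    (m := monomial (S.sup v - ((S.erase s).erase s').sup v) 1) ?_ ?_ ?_
  · rw [monomial_mul, one_mul, tsub_add_tsub_cancel Finset.sup_erase_le Finset.sup_erase_le]
  · rw [monomial_mul, one_mul, tsub_add_tsub_cancel Finset.sup_erase_le Finset.sup_erase_le,
      Finset.erase_right_comm]
  · have h₁ := taylorPos_erase hs s'
    have h₂ := taylorPos_erase hs' s
    have := Finset.card_erase_of_mem hs
    have := Finset.card_erase_of_mem hs'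
    have := Finset.card_pos.2 ⟨s, hs⟩
    rcases hne.lt_or_gt with h | h <;>
      simp only [h, h.not_gt, if_true, if_false] at h₁ h₂ <;> omega

lemma htpyEntry_mul_taylorEntry_insert_self (ht : t ∉ S) :
    htpyEntry 𝕜 v f S t * taylorEntry 𝕜 v (insert t S) t = f t * monomial (v t) 1 := by
  rw [htpyEntry, taylorEntry_of_mem 𝕜 v (Finset.mem_insert_self t S)]
  refine neg_one_pow_mul_mul_neg_one_pow_mul ?_ ?_
  · rw [mul_assoc, monomial_mul, one_mul, Finset.erase_insert ht,
      tsub_add_tsub_cancel Finset.sup_insert_le_add (Finset.sup_mono (Finset.subset_insert t S)),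
      add_tsub_cancel_right]
  · have := taylorPos_insert ht t
    rw [Finset.card_insert_of_notMem ht]
    simp only [lt_irrefl, if_false] at this
    omega

lemma taylorEntry_mul_htpyEntry_erase_self (hs : s ∈ S) :
    taylorEntry 𝕜 v S s * htpyEntry 𝕜 v f (S.erase s) s = f s * monomial (v s) 1 := by
  rw [htpyEntry, taylorEntry_of_mem 𝕜 v hs]
  refine neg_one_pow_mul_mul_neg_one_pow_mul ?_ ?_
  · rw [mul_left_comm, monomial_mul, one_mul,
      tsub_add_add_tsub_cancel Finset.sup_erase_le Finset.sup_insert_le_add,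
      Finset.insert_erase hs, add_tsub_cancel_right]
  · have h₁ := taylorPos_erase hs s
    have := Finset.card_erase_of_mem hs
    have := Finset.card_pos.2 ⟨s, hs⟩
    simp only [lt_irrefl, if_false] at h₁
    omega

lemma htpyEntry_mul_taylorEntry_add_taylorEntry_mul_htpyEntry (hs : s ∈ S) (ht : t ∉ S) :
    htpyEntry 𝕜 v f S t * taylorEntry 𝕜 v (insert t S) s +
      taylorEntry 𝕜 v S s * htpyEntry 𝕜 v f (S.erase s) t = 0 := by
  have hne : s ≠ t := fun h => ht (h ▸ hs)
  rw [htpyEntry, htpyEntry, taylorEntry_of_mem 𝕜 v hs,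
    taylorEntry_of_mem 𝕜 v (Finset.mem_insert_of_mem hs), Finset.erase_insert_of_ne hne.symm]
  refine neg_one_pow_mul_mul_add_eq_zero
    (m := f t * monomial (v t + S.sup v - (insert t (S.erase s)).sup v) 1) ?_ ?_ ?_
  · rw [mul_assoc, monomial_mul, one_mul, tsub_add_tsub_cancel Finset.sup_insert_le_add
      (Finset.erase_insert_of_ne hne.symm ▸ Finset.sup_erase_le)]
  · rw [mul_left_comm, monomial_mul, one_mul,
      tsub_add_add_tsub_cancel Finset.sup_erase_le Finset.sup_insert_le_add]
  · have h₁ := taylorPos_insert ht s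
    have h₂ := taylorPos_erase hs t
    have := Finset.card_insert_of_notMem ht
    have := Finset.card_erase_of_mem hs
    have := Finset.card_pos.2 ⟨s, hs⟩
    rcases hne.lt_or_gt with h | h <;>
      simp only [h, h.not_gt, if_true, if_false] at h₁ h₂ <;> omega

lemma htpyEntry_mul_htpyEntry_insert_add_swap (ht : t ∉ S) (ht' : t' ∉ S) (hne : t ≠ t') :
    htpyEntry 𝕜 v f S t * htpyEntry 𝕜 v f (insert t S) t' +
      htpyEntry 𝕜 v f S t' * htpyEntry 𝕜 v f (insert t' S) t = 0 := by
  simp only [htpyEntry]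
  refine neg_one_pow_mul_mul_add_eq_zero
    (m := f t * f t' * monomial (v t' + (v t + S.sup v) - (insert t' (insert t S)).sup v) 1)
    ?_ ?_ ?_
  · rw [mul_mul_mul_comm, monomial_mul, one_mul,
      tsub_add_add_tsub_cancel Finset.sup_insert_le_add Finset.sup_insert_le_add]
  · rw [mul_mul_mul_comm, monomial_mul, one_mul, mul_comm (f t'),
      tsub_add_add_tsub_cancel Finset.sup_insert_le_add Finset.sup_insert_le_add,
      Finset.insert_comm, add_left_comm]
  · have h₁ := taylorPos_insert ht t'
    have h₂ := taylorPos_insert ht' t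
    have := Finset.card_insert_of_notMem ht
    have := Finset.card_insert_of_notMem ht'
    rcases hne.lt_or_gt with h | h <;>
      simp only [h, h.not_gt, if_true, if_false] at h₁ h₂ <;> omega

end Entries

section Maps

variable (v : Fin r → (Fin n →₀ ℕ)) (f g : Fin r → MvPolynomial (Fin n) 𝕜)
  (S : Finset (Fin r)) (q : MvPolynomial (Fin n) 𝕜)

lemma taylorTau_single :
    taylorTau 𝕜 v (Finsupp.single S q) =
      ∑ s ∈ S, Finsupp.single (S.erase s) (q * taylorEntry 𝕜 v S s) := by
  simp only [taylorTau, Finsupp.lsum_single, LinearMap.toSpanSingleton_apply, Finset.smul_sum,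
    Finsupp.smul_single, smul_eq_mul]

lemma taylorHtpy_single :
    taylorHtpy 𝕜 v f (Finsupp.single S q) =
      ∑ t ∈ Sᶜ, Finsupp.single (insert t S) (q * htpyEntry 𝕜 v f S t) := by
  simp only [taylorHtpy, Finsupp.lsum_single, LinearMap.toSpanSingleton_apply, Finset.smul_sum,
    Finsupp.smul_single, smul_eq_mul]

lemma taylorTau_comp_taylorTau : taylorTau 𝕜 v ∘ₗ taylorTau 𝕜 v = 0 := by
  refine Finsupp.lhom_ext fun S q => ?_
  simp only [LinearMap.comp_apply, LinearMap.zero_apply, taylorTau_single, map_sum]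
  refine Finset.sum_sum_erase_eq_zero_of_add_swap fun s hs s' hs' hne => ?_
  rw [Finset.erase_right_comm]
  exact Finsupp.single_mul_add_single_mul_eq_zero
    (taylorEntry_mul_taylorEntry_erase_add_swap 𝕜 v hs hs' hne)

lemma taylorHtpy_comp_taylorHtpy_self : taylorHtpy 𝕜 v f ∘ₗ taylorHtpy 𝕜 v f = 0 := by
  refine Finsupp.lhom_ext fun S q => ?_
  simp only [LinearMap.comp_apply, LinearMap.zero_apply, taylorHtpy_single, map_sum,
    Finset.compl_insert]
  refine Finset.sum_sum_erase_eq_zero_of_add_swap fun t ht t' ht' hne => ?_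
  rw [Finset.mem_compl] at ht ht'
  rw [Finset.insert_comm]
  exact Finsupp.single_mul_add_single_mul_eq_zero
    (htpyEntry_mul_htpyEntry_insert_add_swap 𝕜 v f ht ht' hne)

lemma htpyEntry_add (T : Finset (Fin r)) (t : Fin r) :
    htpyEntry 𝕜 v (f + g) T t = htpyEntry 𝕜 v f T t + htpyEntry 𝕜 v g T t := by
  simp only [htpyEntry, Pi.add_apply]
  ring

lemma taylorHtpy_add : taylorHtpy 𝕜 v (f + g) = taylorHtpy 𝕜 v f + taylorHtpy 𝕜 v g := by
  refine Finsupp.lhom_ext fun S q => ?_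
  simp only [LinearMap.add_apply, taylorHtpy_single, htpyEntry_add, mul_add, Finsupp.single_add,
    Finset.sum_add_distrib]

lemma taylorHtpy_comp_add_comp_eq_zero :
    taylorHtpy 𝕜 v f ∘ₗ taylorHtpy 𝕜 v g + taylorHtpy 𝕜 v g ∘ₗ taylorHtpy 𝕜 v f = 0 := by
  have h := taylorHtpy_comp_taylorHtpy_self 𝕜 v (f + g)
  rw [taylorHtpy_add, LinearMap.comp_add, LinearMap.add_comp, LinearMap.add_comp,
    taylorHtpy_comp_taylorHtpy_self, taylorHtpy_comp_taylorHtpy_self] at h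
  rwa [zero_add, add_zero, add_comm] at h

lemma taylorTau_taylorHtpy_single :
    taylorTau 𝕜 v (taylorHtpy 𝕜 v f (Finsupp.single S q)) =
      ∑ t ∈ Sᶜ, Finsupp.single S (q * (f t * monomial (v t) 1)) +
        ∑ t ∈ Sᶜ, ∑ s ∈ S, Finsupp.single (insert t (S.erase s))
          (q * htpyEntry 𝕜 v f S t * taylorEntry 𝕜 v (insert t S) s) := by
  rw [taylorHtpy_single, map_sum, ← Finset.sum_add_distrib]
  refine Finset.sum_congr rfl fun t ht => ?_
  rw [Finset.mem_compl] at ht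
  rw [taylorTau_single, Finset.sum_insert ht, Finset.erase_insert ht, mul_assoc,
    htpyEntry_mul_taylorEntry_insert_self 𝕜 v f ht]
  congr 1
  refine Finset.sum_congr rfl fun s hs => ?_
  rw [Finset.erase_insert_of_ne (ne_of_mem_of_not_mem hs ht).symm]

lemma taylorHtpy_taylorTau_single :
    taylorHtpy 𝕜 v f (taylorTau 𝕜 v (Finsupp.single S q)) =
      ∑ s ∈ S, Finsupp.single S (q * (f s * monomial (v s) 1)) +
        ∑ s ∈ S, ∑ t ∈ Sᶜ, Finsupp.single (insert t (S.erase s))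
          (q * taylorEntry 𝕜 v S s * htpyEntry 𝕜 v f (S.erase s) t) := by
  rw [taylorTau_single, map_sum, ← Finset.sum_add_distrib]
  refine Finset.sum_congr rfl fun s hs => ?_
  rw [taylorHtpy_single, Finset.compl_erase, Finset.sum_insert (by simp [hs]),
    Finset.insert_erase hs, mul_assoc, taylorEntry_mul_htpyEntry_erase_self 𝕜 v f hs]

lemma taylorTau_comp_taylorHtpy_add_comp :
    taylorTau 𝕜 v ∘ₗ taylorHtpy 𝕜 v f + taylorHtpy 𝕜 v f ∘ₗ taylorTau 𝕜 v =
      (∑ t, f t * monomial (v t) 1) • LinearMap.id := by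
  refine Finsupp.lhom_ext fun S q => ?_
  have hoff : ∑ t ∈ Sᶜ, ∑ s ∈ S, Finsupp.single (insert t (S.erase s))
        (q * htpyEntry 𝕜 v f S t * taylorEntry 𝕜 v (insert t S) s) +
      ∑ s ∈ S, ∑ t ∈ Sᶜ, Finsupp.single (insert t (S.erase s))
        (q * taylorEntry 𝕜 v S s * htpyEntry 𝕜 v f (S.erase s) t) = 0 := by
    rw [Finset.sum_comm (s := S), ← Finset.sum_add_distrib]
    refine Finset.sum_eq_zero fun t ht => ?_
    rw [← Finset.sum_add_distrib]
    exact Finset.sum_eq_zero fun s hs => Finsupp.single_mul_add_single_mul_eq_zero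
      (htpyEntry_mul_taylorEntry_add_taylorEntry_mul_htpyEntry 𝕜 v f hs (Finset.mem_compl.1 ht))
  rw [LinearMap.add_apply, LinearMap.comp_apply, LinearMap.comp_apply,
    taylorTau_taylorHtpy_single, taylorHtpy_taylorTau_single, add_add_add_comm, hoff, add_zero,
    add_comm, Finset.sum_add_sum_compl, ← Finsupp.single_finsetSum, ← Finset.mul_sum,
    LinearMap.smul_apply, LinearMap.id_apply, Finsupp.smul_single, smul_eq_mul, mul_comm]

end Maps

section System

variable {c : ℕ} (v : Fin r → (Fin n →₀ ℕ)) (f : Fin c → Fin r → MvPolynomial (Fin n) 𝕜)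

lemma taylorSystem_zero : taylorSystem v f 0 = taylorTau 𝕜 v :=
  if_pos rfl

lemma taylorSystem_of_ne_zero {u : Fin c →₀ ℕ} (hu : u ≠ 0) :
    taylorSystem v f u =
      ∑ i, if u = Finsupp.single i 1 then taylorHtpy 𝕜 v (f i) else 0 :=
  if_neg hu

lemma taylorSystem_single (j : Fin c) :
    taylorSystem v f (Finsupp.single j 1) = taylorHtpy 𝕜 v (f j) := by
  rw [taylorSystem_of_ne_zero 𝕜 v f (by simp)]
  simp [Finsupp.single_left_inj one_ne_zero]

lemma taylorSystem_eq_zero_of_two_le {u : Fin c →₀ ℕ} (hu : 2 ≤ u.sum fun _ x => x) :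
    taylorSystem v f u = 0 := by
  have hu0 : u ≠ 0 := by
    rintro rfl
    simp at hu
  rw [taylorSystem_of_ne_zero 𝕜 v f hu0]
  refine Finset.sum_eq_zero fun i _ => if_neg ?_
  rintro rfl
  rw [Finsupp.sum_single_index rfl] at hu
  omega

lemma taylorSystem_comp_taylorSystem_of_mem_antidiagonal {u : Fin c →₀ ℕ}
    (hu : 2 ≤ u.sum fun _ x => x) {p : (Fin c →₀ ℕ) × (Fin c →₀ ℕ)}
    (hp : p ∈ Finset.HasAntidiagonal.antidiagonal u) :
    taylorSystem v f p.1 ∘ₗ taylorSystem v f p.2 =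
      ∑ i, ∑ j, if p = (Finsupp.single i 1, Finsupp.single j 1) then
        taylorHtpy 𝕜 v (f i) ∘ₗ taylorHtpy 𝕜 v (f j) else 0 := by
  rw [Finset.HasAntidiagonal.mem_antidiagonal] at hp
  by_cases h₁ : p.1 = 0
  · have hσ : taylorSystem v f p.2 = 0 :=
      taylorSystem_eq_zero_of_two_le 𝕜 v f (by rwa [← hp, h₁, zero_add] at hu)
    rw [hσ, LinearMap.comp_zero]
    simp [Prod.ext_iff, h₁, eq_comm (a := (0 : Fin c →₀ ℕ))]
  by_cases h₂ : p.2 = 0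
  · have hσ : taylorSystem v f p.1 = 0 :=
      taylorSystem_eq_zero_of_two_le 𝕜 v f (by rwa [← hp, h₂, add_zero] at hu)
    rw [hσ, LinearMap.zero_comp]
    simp [Prod.ext_iff, h₂, eq_comm (a := (0 : Fin c →₀ ℕ))]
  rw [taylorSystem_of_ne_zero 𝕜 v f h₁, taylorSystem_of_ne_zero 𝕜 v f h₂,
    ← Module.End.mul_eq_comp, Finset.sum_mul_sum]
  simp only [ite_zero_mul_ite_zero, Module.End.mul_eq_comp, Prod.ext_iff]

lemma sum_antidiagonal_taylorSystem_comp {u : Fin c →₀ ℕ} (hu : 2 ≤ u.sum fun _ x => x) :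
    ∑ p ∈ Finset.HasAntidiagonal.antidiagonal u, taylorSystem v f p.1 ∘ₗ taylorSystem v f p.2 =
      ∑ i, ∑ j, if Finsupp.single i 1 + Finsupp.single j 1 = u then
        taylorHtpy 𝕜 v (f i) ∘ₗ taylorHtpy 𝕜 v (f j) else 0 := by
  rw [Finset.sum_congr rfl fun p hp =>
    taylorSystem_comp_taylorSystem_of_mem_antidiagonal 𝕜 v f hu hp, Finset.sum_comm]
  refine Finset.sum_congr rfl fun i _ => ?_
  rw [Finset.sum_comm]
  refine Finset.sum_congr rfl fun j _ => ?_
  simp only [Finset.sum_ite_eq', Finset.HasAntidiagonal.mem_antidiagonal]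

end System

/-- The collection `σ` with `σ_𝟎 = τ`, `σ_{e_i} = σ_i`, and `σ_u = 0` for
`|u| ≥ 2` is a system of higher homotopies for `a_1, …, a_c` on the Taylor complex:
(i) `σ_𝟎` is the differential `τ` and `τ ∘ τ = 0`;
(ii) for each `j`, `σ_𝟎 ∘ σ_{e_j} + σ_{e_j} ∘ σ_𝟎` is multiplication by `a_j`;
(iii) for every `u` with `|u| ≥ 2`, `Σ_{b + b' = u} σ_b ∘ σ_{b'} = 0`.
Here `m_j = x^{v j}` and `a_i = Σ_j f_{i,j} m_j`. -/
theorem taylor_system_of_higher_homotopies {𝕜 : Type*} [Field 𝕜] {n r c : ℕ}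
    (v : Fin r → (Fin n →₀ ℕ)) (a : Fin c → MvPolynomial (Fin n) 𝕜)
    (f : Fin c → Fin r → MvPolynomial (Fin n) 𝕜)
    (ha : ∀ i, a i = ∑ j : Fin r, f i j * monomial (v j) 1) :
    (taylorSystem v f 0 = taylorTau 𝕜 v ∧
      taylorSystem v f 0 ∘ₗ taylorSystem v f 0 = 0) ∧
    (∀ j : Fin c,
      taylorSystem v f 0 ∘ₗ taylorSystem v f (Finsupp.single j 1) +
        taylorSystem v f (Finsupp.single j 1) ∘ₗ taylorSystem v f 0 =
        a j • LinearMap.id) ∧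
    (∀ u : Fin c →₀ ℕ, 2 ≤ u.sum (fun _ x => x) →
      ∑ p ∈ Finset.HasAntidiagonal.antidiagonal u, taylorSystem v f p.1 ∘ₗ taylorSystem v f p.2 = 0) := by
  refine ⟨⟨taylorSystem_zero 𝕜 v f, ?_⟩, fun j => ?_, fun u hu => ?_⟩
  · rw [taylorSystem_zero]
    exact taylorTau_comp_taylorTau 𝕜 v
  · rw [taylorSystem_zero, taylorSystem_single, ha]
    exact taylorTau_comp_taylorHtpy_add_comp 𝕜 v (f j)
  rw [sum_antidiagonal_taylorSystem_comp 𝕜 v f hu]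
  refine Finset.sum_sum_eq_zero_of_add_swap (fun i _ => ?_) (fun i _ j _ _ => ?_)
  · simp only [taylorHtpy_comp_taylorHtpy_self, ite_self]
  · rw [add_comm (Finsupp.single j 1)]
    split_ifs
    · exact taylorHtpy_comp_add_comp_eq_zero 𝕜 v (f i) (f j)
    · exact add_zero 0
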